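/- arXiv:2510.01844 — 4 statements merged into one kernel-verified Lean document; each statement's English description precedes it below -/
import Mathlib

section
/- For every integer base b > 2 and every integer n ≥ 1, if ⌊log₂ n⌋ + 1 = (b - 1) · (⌊log_b n⌋ + 1), then b = 3 and n ∈ {2, 8}; that is, for b = 3 the equality ⌊log₂ n⌋ + 1 = 2(⌊log₃ n⌋ + 1) holds iff n = 2 or n = 8, and for b ≥ 4 it never holds. -/
lemma aux_b_le_pow : ∀ b : ℕ, 4 ≤ b → b ≤ 2 ^ (b - 2) := by
  intro b hb
  induction b with
  | zero => omega
  | succ m ih =>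
    rcases Nat.lt_or_ge m 4 with h | h
    · have hm : m = 3 := by omega
      subst hm; norm_num
    · have h1 := ih h
      have e : m + 1 - 2 = (m - 2) + 1 := by omega
      rw [e, pow_succ]
      omega

lemma aux_three_pow : ∀ k : ℕ, 2 ≤ k → 3 ^ (k + 1) ≤ 2 ^ (2 * k + 1) := by
  intro k hk
  induction k with
  | zero => omega
  | succ m ih =>
    rcases Nat.lt_or_ge m 2 with h | h
    · have hm : m = 1 := by omega
      subst hm; norm_num
    · have h1 := ih h
      calc 3 ^ (m + 1 + 1) = 3 ^ (m + 1) * 3 := pow_succ _ _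
        _ ≤ 2 ^ (2 * m + 1) * 4 := by omega
        _ = 2 ^ (2 * (m + 1) + 1) := by ring

theorem card_count_equality_cases (b n : ℕ) (hb : 2 < b) (hn : 1 ≤ n) :
    Nat.log 2 n + 1 = (b - 1) * (Nat.log b n + 1) ↔ b = 3 ∧ (n = 8 ∨ n = 2) := by
  constructor
  · intro h
    have hnlt : n < b ^ (Nat.log b n + 1) := Nat.lt_pow_succ_log_self (by omega) n
    have hple : 2 ^ (Nat.log 2 n) ≤ n := Nat.pow_log_le_self 2 (by omega)
    have hb3 : b = 3 := by
      by_contra hne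
      have hb4 : 4 ≤ b := by omega
      set k := Nat.log b n
      have h1 : b ≤ 2 ^ (b - 2) := aux_b_le_pow b hb4
      have h2 : b ^ (k + 1) ≤ (2 ^ (b - 2)) ^ (k + 1) := Nat.pow_le_pow_left h1 _
      have h3 : (2 ^ (b - 2)) ^ (k + 1) = 2 ^ ((b - 2) * (k + 1)) := by rw [← pow_mul]
      have h4 : 2 ^ ((b - 2) * (k + 1)) ≤ 2 ^ (Nat.log 2 n) := by
        apply Nat.pow_le_pow_right (by norm_num)
        have e : (b - 1) * (k + 1) = (b - 2) * (k + 1) + (k + 1) := by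
          have e' : b - 1 = (b - 2) + 1 := by omega
          rw [e']; ring
        omega
      omega
    subst hb3
    set k := Nat.log 3 n with hkdef
    have hkle : k ≤ 1 := by
      by_contra hk2
      push_neg at hk2
      have h1 : 3 ^ (k + 1) ≤ 2 ^ (2 * k + 1) := aux_three_pow k (by omega)
      have h2 : 2 ^ (2 * k + 1) ≤ 2 ^ (Nat.log 2 n) := by
        apply Nat.pow_le_pow_right (by norm_num)
        omega
      omega
    refine ⟨rfl, ?_⟩
    rcases Nat.le_one_iff_eq_zero_or_eq_one.mp hkle with h0 | h1
    · right
      rw [h0] at h hnlt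
      have hl : Nat.log 2 n = 1 := by omega
      rw [hl] at hple
      norm_num at hnlt hple
      omega
    · left
      rw [h1] at h hnlt
      have hl : Nat.log 2 n = 3 := by omega
      rw [hl] at hple
      norm_num at hnlt hple
      omega
  · rintro ⟨rfl, rfl | rfl⟩
    · have h1 : Nat.log 2 8 = 3 := Nat.log_eq_of_pow_le_of_lt_pow (by norm_num) (by norm_num)
      have h2 : Nat.log 3 8 = 1 := Nat.log_eq_of_pow_le_of_lt_pow (by norm_num) (by norm_num)
      rw [h1, h2]
    · have h1 : Nat.log 2 2 = 1 := Nat.log_eq_of_pow_le_of_lt_pow (by norm_num) (by norm_num)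
      have h2 : Nat.log 3 2 = 0 := Nat.log_of_lt (by norm_num)
      rw [h1, h2]
end

section
/- For every natural number N ≥ 1 and every integer base b > 2, 2^N - 1 > b^⌊N/(b-1)⌋ - 1. -/
lemma blt : ∀ b : ℕ, 3 ≤ b → b < 2 ^ (b - 1) := by
  intro b hb
  induction b with
  | zero => omega
  | succ n ih =>
    rcases Nat.lt_or_ge n 3 with h | h
    · interval_cases n <;> simp_all
    · have h2 := ih (by omega)
      have : n + 1 - 1 = (n - 1) + 1 := by omega
      rw [this, pow_succ]
      have : 1 ≤ 2 ^ (n - 1) := Nat.one_le_two_pow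
      omega

theorem binary_widest_range (N b : ℕ) (hN : 1 ≤ N) (hb : 2 < b) :
    2 ^ N - 1 > b ^ (N / (b - 1)) - 1 := by
  have key : b ^ (N / (b - 1)) < 2 ^ N := by
    set k := N / (b - 1) with hk
    rcases Nat.eq_zero_or_pos k with h0 | h0
    · rw [h0, pow_zero]
      exact Nat.one_lt_two_pow (by omega)
    · calc b ^ k < (2 ^ (b - 1)) ^ k :=
            Nat.pow_lt_pow_left (blt b (by omega)) (by omega)
        _ = 2 ^ ((b - 1) * k) := by rw [← pow_mul]
        _ ≤ 2 ^ N := Nat.pow_le_pow_right (by norm_num)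
            (by rw [mul_comm]; exact Nat.div_mul_le_self N (b - 1))
  have h1 : 1 ≤ b ^ (N / (b - 1)) := Nat.one_le_pow _ _ (by omega)
  omega
end

section
/- For every integer n ≥ 1, ⌊log₂ n⌋ ≤ 4·⌊log₅ n⌋ + 3. -/
theorem base_five_case (n : ℕ) (hn : 1 ≤ n) :
    Nat.log 2 n ≤ 4 * Nat.log 5 n + 3 := by
  have h1 : n < 5 ^ (Nat.log 5 n + 1) := Nat.lt_pow_succ_log_self (by norm_num) n
  have h2 : (5:ℕ) ^ (Nat.log 5 n + 1) ≤ 2 ^ (4 * Nat.log 5 n + 4) := by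
    have : (4 * Nat.log 5 n + 4) = 4 * (Nat.log 5 n + 1) := by ring
    rw [this, pow_mul]
    exact Nat.pow_le_pow_left (by norm_num) _
  have := Nat.log_lt_of_lt_pow (Nat.one_le_iff_ne_zero.mp hn) (lt_of_lt_of_le h1 h2)
  omega
end

section
/- For every integer n ≥ 1, the minimum over all integer bases b ≥ 2 of the card count (b-1)(⌊log_b n⌋ + 1) is attained at b = 2. -/
theorem binary_minimizes_cards (n : ℕ) (hn : 1 ≤ n) (b : ℕ) (hb : 2 ≤ b) :
    (2 - 1) * (Nat.log 2 n + 1) ≤ (b - 1) * (Nat.log b n + 1) := by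
  have hk : n < b ^ (Nat.log b n + 1) := Nat.lt_pow_succ_log_self (by omega) n
  have hb2 : b ≤ 2 ^ (b - 1) := by
    have := Nat.lt_two_pow_self (n := b - 1)
    omega
  have h1 : 2 ^ Nat.log 2 n ≤ n := Nat.pow_log_le_self 2 (by omega)
  have h2 : b ^ (Nat.log b n + 1) ≤ 2 ^ ((b - 1) * (Nat.log b n + 1)) := by
    calc b ^ (Nat.log b n + 1) ≤ (2 ^ (b - 1)) ^ (Nat.log b n + 1) :=
          Nat.pow_le_pow_left hb2 _
      _ = 2 ^ ((b - 1) * (Nat.log b n + 1)) := by rw [← pow_mul]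
  have : 2 ^ Nat.log 2 n < 2 ^ ((b - 1) * (Nat.log b n + 1)) := by omega
  have := (Nat.pow_lt_pow_iff_right (a := 2) (by omega)).mp this
  omega
end
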